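/- arXiv:math/0306208 — 14 statements merged into one kernel-verified Lean document; each statement's English description precedes it below -/
import Mathlib

section
/- If a ternary semigroup (G,[ ]) has an element e such that [eye] = y for all y in G, then the binary operation x∗y = [xey] is associative and [xyz] = (x∗y)∗z for all x,y,z in G, i.e. the ternary operation is derived from a binary semigroup operation. -/
/-- If a ternary semigroup (G,[ ]) has an element e with [eye] = y for all y,
then x∗y = [xey] is associative and [xyz] = (x∗y)∗z. -/
theorem stmt0 {G : Type*} (f : G → G → G → G)
    (assoc : ∀ x y z u v : G, f (f x y z) u v = f x (f y z u) v ∧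
      f x (f y z u) v = f x y (f z u v))
    (e : G) (he : ∀ y : G, f e y e = y) :
    (∀ x y z : G, f (f x e y) e z = f x e (f y e z)) ∧
    (∀ x y z : G, f x y z = f (f x e y) e z) := by
  have key : ∀ x y z : G, f (f x e y) e z = f x y z := fun x y z => by
    rw [(assoc x e y e z).1, he]
  refine ⟨fun x y z => ?_, fun x y z => (key x y z).symm⟩
  rw [key, ← (assoc x e y e z).2, he]
end

section
/- For any ternary semigroup (G,[ ]) with a left identity e (i.e. [eex] = x for all x), the binary operation x⊙y = [xey] is associative, the map μ(x) = [exe] is an endomorphism of (G,⊙), and [xyz] = x⊙μ(y)⊙z for all x,y,z ∈ G. -/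
/-- For a ternary semigroup with a left identity e, x⊙y = [xey] is associative,
μ(x) = [exe] is an endomorphism of (G,⊙), and [xyz] = x⊙μ(y)⊙z. -/
theorem stmt2 {G : Type*} (f : G → G → G → G)
    (assoc : ∀ x y z u v : G, f (f x y z) u v = f x (f y z u) v ∧
      f x (f y z u) v = f x y (f z u v))
    (e : G) (he : ∀ x : G, f e e x = x) :
    (∀ x y z : G, f (f x e y) e z = f x e (f y e z)) ∧
    (∀ x y : G, f e (f x e y) e = f (f e x e) e (f e y e)) ∧
    (∀ x y z : G, f x y z = f (f x e (f e y e)) e z) := by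
  have h1 : ∀ x y z u v : G, f (f x y z) u v = f x (f y z u) v :=
    fun x y z u v => (assoc x y z u v).1
  have h2 : ∀ x y z u v : G, f x (f y z u) v = f x y (f z u v) :=
    fun x y z u v => (assoc x y z u v).2
  refine ⟨fun x y z => ?_, fun x y => ?_, fun x y z => ?_⟩
  · rw [h1, h2]
  · rw [h2 e x e y, h1 e x e e, h2, he]
  · rw [h1 x e (f e y e) e z, h2 e e y e e, he, h2 x y e e z, he]
end

section
/- A ternary semigroup is left and right cancellative if and only if it is middle cancellative. -/
/-- A ternary semigroup is left and right cancellative iff it is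
middle cancellative. -/
theorem stmt3 {G : Type*} (f : G → G → G → G)
    (assoc : ∀ x y z u v : G, f (f x y z) u v = f x (f y z u) v ∧
      f x (f y z u) v = f x y (f z u v)) :
    ((∀ a b x y : G, f a b x = f a b y → x = y) ∧
     (∀ a b x y : G, f x a b = f y a b → x = y)) ↔
    (∀ a b x y : G, f a x b = f a y b → x = y) := by
  constructor
  · rintro ⟨hl, hr⟩ a b x y h
    -- f (f a x b) b a = f a (f x b b) a, etc.
    have h1 : f a a (f x b a) = f a a (f y b a) := by
      calc f a a (f x b a) = f a (f a x b) a := ((assoc a a x b a).2).symm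
        _ = f a (f a y b) a := by rw [h]
        _ = f a a (f y b a) := (assoc a a y b a).2
    exact hr b a x y (hl a a _ _ h1)
  · intro hm
    constructor
    · intro a b x y h
      apply hm (f a a b) a
      calc f (f a a b) x a = f a (f a b x) a := (assoc a a b x a).1
        _ = f a (f a b y) a := by rw [h]
        _ = f (f a a b) y a := ((assoc a a b y a).1).symm
    · intro a b x y h
      apply hm a (f a b a)
      calc f a x (f a b a) = f a (f x a b) a := ((assoc a x a b a).2).symm
        _ = f a (f y a b) a := by rw [h]
        _ = f a y (f a b a) := (assoc a y a b a).2
end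

section
/- If a ternary semigroup (G,[ ]) satisfies the identity [xyz] = [yxz] for all x,y,z and there exist elements a,b ∈ G with [axb] = x for all x ∈ G, then (G,[ ]) is commutative, i.e. [xyz] is invariant under all permutations of x,y,z. -/
/-!
Writing `z = [a z b]` and reassociating moves `z` to the front:
`[x y z] = [x y [a z b]] = [[x y a] z b] = [z [x y a] b] = [z x [y a b]] = [z x y]`.
This 3-cycle together with the transposition `(1 2)` generates `S₃`.
-/

open Equiv

theorem apply_comp_perm_eq_of_apply_comp_swap {α β : Type*} {n : ℕ} (F : (Fin (n + 1) → α) → β)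
    (hswap : ∀ (i : Fin n) (g : Fin (n + 1) → α), F (g ∘ swap i.castSucc i.succ) = F g)
    (σ : Perm (Fin (n + 1))) (g : Fin (n + 1) → α) : F (g ∘ σ) = F g := by
  have hσ : σ ∈ Submonoid.closure (Set.range fun i : Fin n ↦ swap i.castSucc i.succ) := by
    rw [Perm.mclosure_swap_castSucc_succ]; trivial
  induction hσ using Submonoid.closure_induction generalizing g with
  | mem _ hτ => obtain ⟨i, rfl⟩ := hτ; exact hswap i g
  | one => rfl
  | mul σ τ _ _ hσ hτ => rw [Perm.coe_mul, ← Function.comp_assoc, hτ, hσ]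

section TernarySemigroup

variable {G : Type*} {f : G → G → G → G}
  (assoc : ∀ x y z u v : G, f (f x y z) u v = f x (f y z u) v ∧ f x (f y z u) v = f x y (f z u v))
  (hcomm12 : ∀ x y z : G, f x y z = f y x z)
  {a b : G} (hab : ∀ x : G, f a x b = x)
include assoc hcomm12 hab

theorem ternary_rotate (x y z : G) : f x y z = f z x y :=
  calc f x y z = f x y (f a z b) := by rw [hab]
    _ = f x (f y a z) b := (assoc x y a z b).2.symm
    _ = f (f x y a) z b := (assoc x y a z b).1.symm
    _ = f z (f x y a) b := hcomm12 _ _ _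
    _ = f z x (f y a b) := (assoc z x y a b).2
    _ = f z x y := by rw [hcomm12 y a b, hab]

theorem ternary_comm23 (x y z : G) : f x y z = f x z y := by
  rw [ternary_rotate assoc hcomm12 hab x y z, hcomm12 z x y,
    ternary_rotate assoc hcomm12 hab x z y]

end TernarySemigroup

/-- If a ternary semigroup satisfies [xyz] = [yxz] and there are a,b with
[axb] = x for all x, then it is commutative (invariant under all permutations). -/
theorem stmt4 {G : Type*} (f : G → G → G → G)
    (assoc : ∀ x y z u v : G, f (f x y z) u v = f x (f y z u) v ∧
      f x (f y z u) v = f x y (f z u v))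
    (hcomm12 : ∀ x y z : G, f x y z = f y x z)
    (a b : G) (hab : ∀ x : G, f a x b = x) :
    ∀ (g : Fin 3 → G) (σ : Equiv.Perm (Fin 3)),
      f (g 0) (g 1) (g 2) = f (g (σ 0)) (g (σ 1)) (g (σ 2)) := by
  intro g σ
  refine (apply_comp_perm_eq_of_apply_comp_swap (fun g ↦ f (g 0) (g 1) (g 2)) ?_ σ g).symm
  intro i g
  fin_cases i
  · exact (hcomm12 _ _ _).symm
  · exact (ternary_comm23 assoc hcomm12 hab _ _ _).symm
end

section
/- A semicommutative ternary semigroup is medial. -/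
/-- A semicommutative ternary semigroup is medial. -/
theorem stmt5 {G : Type*} (f : G → G → G → G)
    (assoc : ∀ x y z u v : G, f (f x y z) u v = f x (f y z u) v ∧
      f x (f y z u) v = f x y (f z u v))
    (hsc : ∀ x y z : G, f x y z = f z y x) :
    ∀ x11 x12 x13 x21 x22 x23 x31 x32 x33 : G,
      f (f x11 x12 x13) (f x21 x22 x23) (f x31 x32 x33) =
      f (f x11 x21 x31) (f x12 x22 x32) (f x13 x23 x33) := by
  intro a b c d e p g h i
  have A1 : ∀ x y z u v : G, f (f x y z) u v = f x (f y z u) v :=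
    fun x y z u v => (assoc x y z u v).1
  have A2 : ∀ x y z u v : G, f x (f y z u) v = f x y (f z u v) :=
    fun x y z u v => (assoc x y z u v).2
  -- swap positions 2 and 4 in a left-associated 5-product
  have l24 : ∀ x1 x2 x3 x4 x5 : G, f (f x1 x2 x3) x4 x5 = f (f x1 x4 x3) x2 x5 := by
    intro x1 x2 x3 x4 x5
    rw [A1, hsc x2 x3 x4, ← A1]
  -- swap positions 3 and 5 in a left-associated 5-product
  have l35 : ∀ x1 x2 x3 x4 x5 : G, f (f x1 x2 x3) x4 x5 = f (f x1 x2 x5) x4 x3 := by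
    intro x1 x2 x3 x4 x5
    rw [A1, A2, hsc x3 x4 x5, ← A2, ← A1]
  calc f (f a b c) (f d e p) (f g h i)
      = f (f (f (f a b c) d e) p g) h i := by
        rw [← A2 (f a b c) (f d e p) g h i, ← A1 (f a b c) (f d e p) g h i,
          ← A1 (f a b c) d e p g]
    _ = f (f (f (f a d g) b e) h c) p i := by
        rw [l24 a b c d e, l35 a d c b e, l35 (f a d e) b c p g, l35 a d e b g,
          l24 (f (f a d g) b e) p c h i]
    _ = f (f a d g) (f b e h) (f c p i) := by
        rw [A1 (f (f a d g) b e) h c p i, A2 (f (f a d g) b e) h c p i,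
          A1 (f a d g) b e h (f c p i)]
end

section
/- A ternary semigroup (G,[ ]) equipped with a unary operation x ↦ x̄ satisfying the identities [yxx̄] = y and [xx̄y] = y for all x,y ∈ G is a ternary group, i.e. for all a,b,c the equations [xab] = c, [ayb] = c, [abz] = c are solvable. -/
/-- A ternary semigroup with a unary operation x ↦ x̄ satisfying
[yxx̄] = y and [xx̄y] = y is a ternary group: all three equations are solvable. -/
theorem stmt8 {G : Type*} (f : G → G → G → G)
    (assoc : ∀ x y z u v : G, f (f x y z) u v = f x (f y z u) v ∧
      f x (f y z u) v = f x y (f z u v))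
    (bar : G → G)
    (h1 : ∀ x y : G, f y x (bar x) = y)
    (h2 : ∀ x y : G, f x (bar x) y = y) :
    ∀ a b c : G, (∃ x, f x a b = c) ∧ (∃ y, f a y b = c) ∧ (∃ z, f a b z = c) := by
  have hbb : ∀ x : G, bar (bar x) = x := by
    intro x
    have e1 := h1 (bar x) x
    have e2 := h2 x (bar (bar x))
    rw [e2] at e1
    exact e1
  -- left inverse identities
  have hL : ∀ x y : G, f (bar x) x y = y := by
    intro x y
    have := h2 (bar x) y
    rwa [hbb x] at this
  have hR : ∀ x y : G, f y (bar x) x = y := by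
    intro x y
    have := h1 (bar x) y
    rwa [hbb x] at this
  intro a b c
  refine ⟨⟨f c (bar b) (bar a), ?_⟩, ⟨f (bar a) c (bar b), ?_⟩, ⟨f (bar b) (bar a) c, ?_⟩⟩
  · rw [(assoc c (bar b) (bar a) a b).1, (assoc c (bar b) (bar a) a b).2, hL a b, hR b c]
  · rw [← (assoc a (bar a) c (bar b) b).1, h2 a c, hR b c]
  · rw [← (assoc a b (bar b) (bar a) c).2, h2 b (bar a), h2 a c]
end

section
/- An idempotent ternary group is semicommutative: if [xxx] = x for all x, then [xyz] = [zyx] for all x,y,z. -/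
/-- An idempotent ternary group is semicommutative. -/
theorem stmt10 {G : Type*} (f : G → G → G → G)
    (assoc : ∀ x y z u v : G, f (f x y z) u v = f x (f y z u) v ∧
      f x (f y z u) v = f x y (f z u v))
    (solx : ∀ a b c : G, ∃! x, f x a b = c)
    (soly : ∀ a b c : G, ∃! y, f a y b = c)
    (solz : ∀ a b c : G, ∃! z, f a b z = c)
    (idem : ∀ x : G, f x x x = x) :
    ∀ x y z : G, f x y z = f z y x := by
  have a1 : ∀ p q r s t : G, f (f p q r) s t = f p (f q r s) t :=
    fun p q r s t => (assoc p q r s t).1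
  have a2 : ∀ p q r s t : G, f p (f q r s) t = f p q (f r s t) :=
    fun p q r s t => (assoc p q r s t).2
  -- cancellation laws
  have cx : ∀ a b u v : G, f u a b = f v a b → u = v := by
    intro a b u v h
    obtain ⟨w, _, huniq⟩ := solx a b (f v a b)
    exact (huniq u h).trans (huniq v rfl).symm
  have cz : ∀ a b u v : G, f a b u = f a b v → u = v := by
    intro a b u v h
    obtain ⟨w, _, huniq⟩ := solz a b (f a b v)
    exact (huniq u h).trans (huniq v rfl).symm
  -- a is a two-sided identity for the operation u ∘ v := f u a v
  have L1 : ∀ a u : G, f u a a = u := by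
    intro a u
    apply cx a a
    rw [a1, idem]
  have L2 : ∀ a u : G, f a a u = u := by
    intro a u
    apply cz a a
    rw [← a2, idem]
  -- σ u := f a u a is an involution
  have L3 : ∀ a u : G, f a (f a u a) a = u := by
    intro a u
    rw [← a1, L2, L1]
  -- σ u is a right and left inverse of u
  have inv_r : ∀ a x : G, f x a (f a x a) = a := by
    intro a x
    apply cx a x
    rw [a1, L3, idem, L2]
  -- σ is an endomorphism
  have endo : ∀ a u v : G, f a (f u a v) a = f (f a u a) a (f a v a) := by
    intro a u v
    rw [← a1]
    conv_lhs => rw [← L2 a v]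
    rw [a2]
  -- σ is an anti-endomorphism (uniqueness of inverses)
  have anti : ∀ a u v : G, f a (f u a v) a = f (f a v a) a (f a u a) := by
    intro a u v
    apply cz (f u a v) a
    rw [inv_r]
    have h : f (f u a v) a (f (f a v a) a (f a u a))
        = f u a (f v a (f (f a v a) a (f a u a))) := by
      rw [a1, a2]
    rw [h, ← a2 v a (f a v a) a (f a u a), ← a1, inv_r, L2, inv_r]
  -- commutativity of u ∘ v
  have comm : ∀ a u v : G, f u a v = f v a u := by
    intro a u v
    have h1 := endo a (f a u a) (f a v a)
    have h2 := anti a (f a u a) (f a v a)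
    rw [L3, L3] at h1 h2
    exact h1.symm.trans h2
  intro x y z
  exact comm y x z
end

section
/- A ternary group satisfying the identity [xyx̄] = y for all x,y (where x̄ denotes the skew element) is commutative. -/
/-- A ternary group satisfying [x y x̄] = y for all x,y is commutative. -/
theorem stmt11 {G : Type*} (f : G → G → G → G)
    (assoc : ∀ x y z u v : G, f (f x y z) u v = f x (f y z u) v ∧
      f x (f y z u) v = f x y (f z u v))
    (solx : ∀ a b c : G, ∃! x, f x a b = c)
    (soly : ∀ a b c : G, ∃! y, f a y b = c)
    (solz : ∀ a b c : G, ∃! z, f a b z = c)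
    (bar : G → G) (hbar : ∀ x : G, f x x (bar x) = x)
    (hid : ∀ x y : G, f x y (bar x) = y) :
    ∀ (g : Fin 3 → G) (σ : Equiv.Perm (Fin 3)),
      f (g 0) (g 1) (g 2) = f (g (σ 0)) (g (σ 1)) (g (σ 2)) := by
  have assoc1 : ∀ x y z u v : G, f (f x y z) u v = f x (f y z u) v :=
    fun x y z u v => (assoc x y z u v).1
  have assoc2 : ∀ x y z u v : G, f x (f y z u) v = f x y (f z u v) :=
    fun x y z u v => (assoc x y z u v).2
  -- swap of first two arguments
  have s01 : ∀ a b c : G, f a b c = f b a c := by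
    intro a b c
    calc f a b c = f a b (f a c (bar a)) := by rw [hid a c]
      _ = f a (f b a c) (bar a) := by rw [assoc2 a b a c (bar a)]
      _ = f b a c := hid a _
  -- [y x x̄] = y
  have hyy : ∀ y x : G, f y x (bar x) = y := fun y x => (s01 y x (bar x)).trans (hid x y)
  -- cyclic shift
  have cyc : ∀ a b c : G, f a b c = f b c a := by
    intro a b c
    calc f a b c = f (f a b c) a (bar a) := (hyy _ a).symm
      _ = f a (f b c a) (bar a) := assoc1 a b c a (bar a)
      _ = f b c a := hid a _
  have cyc2 : ∀ a b c : G, f a b c = f c a b := fun a b c => (cyc a b c).trans (cyc b c a)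
  have s12 : ∀ a b c : G, f a b c = f a c b := fun a b c => (cyc a b c).trans ((s01 b c a).trans (cyc2 c b a))
  have s02 : ∀ a b c : G, f a b c = f c b a := fun a b c => (s01 a b c).trans (cyc2 b a c)
  intro g σ
  have tri : ∀ i : Fin 3, i = 0 ∨ i = 1 ∨ i = 2 := by decide
  have inj := σ.injective
  rcases tri (σ 0) with h0 | h0 | h0 <;> rcases tri (σ 1) with h1 | h1 | h1 <;>
    rcases tri (σ 2) with h2 | h2 | h2 <;>
    rw [h0, h1, h2] <;>
    first
      | rfl
      | exact s01 _ _ _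
      | exact s12 _ _ _
      | exact s02 _ _ _
      | exact cyc _ _ _
      | exact cyc2 _ _ _
      | (exfalso; first
          | exact absurd (inj (h0.trans h1.symm)) (by decide)
          | exact absurd (inj (h0.trans h2.symm)) (by decide)
          | exact absurd (inj (h1.trans h2.symm)) (by decide))
end

section
/- (Gluskin–Hosszú theorem) For any ternary group (G,[ ]) and any fixed a ∈ G, the operation x∗y = [xay] makes G a binary group with identity ā, inverse x⁻¹ = [ā x̄ ā], the map φ(x) = [āxa] is an automorphism of (G,∗), and [xyz] = x ∗ φ(y) ∗ φ²(z) ∗ b where b = [ā ā ā]. -/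
/-- Gluskin–Hosszú: For a ternary group and fixed a, x∗y = [xay] is a
group with identity ā, inverse x⁻¹ = [ā x̄ ā], φ(x) = [āxa] is an automorphism, and
[xyz] = x ∗ φ(y) ∗ φ²(z) ∗ b with b = [ā ā ā]. -/
theorem stmt12 {G : Type*} (f : G → G → G → G)
    (assoc : ∀ x y z u v : G, f (f x y z) u v = f x (f y z u) v ∧
      f x (f y z u) v = f x y (f z u v))
    (solx : ∀ a b c : G, ∃! x, f x a b = c)
    (soly : ∀ a b c : G, ∃! y, f a y b = c)
    (solz : ∀ a b c : G, ∃! z, f a b z = c)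
    (bar : G → G) (hbar : ∀ x : G, f x x (bar x) = x)
    (a : G) :
    -- let op x y = f x a y, e = bar a, inv x = f (bar a) (bar x) (bar a),
    -- φ x = f (bar a) x a, b = f (bar a) (bar a) (bar a)
    (∀ x y z : G, f (f x a y) a z = f x a (f y a z)) ∧
    (∀ x : G, f (bar a) a x = x ∧ f x a (bar a) = x) ∧
    (∀ x : G, f x a (f (bar a) (bar x) (bar a)) = bar a ∧
      f (f (bar a) (bar x) (bar a)) a x = bar a) ∧
    (Function.Bijective (fun x => f (bar a) x a)) ∧
    (∀ x y : G, f (bar a) (f x a y) a = f (f (bar a) x a) a (f (bar a) y a)) ∧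
    (∀ x y z : G, f x y z =
      f (f (f x a (f (bar a) y a)) a (f (bar a) (f (bar a) z a) a)) a
        (f (bar a) (bar a) (bar a))) := by
  have a1 : ∀ x y z u v : G, f (f x y z) u v = f x (f y z u) v := fun x y z u v => (assoc x y z u v).1
  have a2 : ∀ x y z u v : G, f x (f y z u) v = f x y (f z u v) := fun x y z u v => (assoc x y z u v).2
  -- L1 : f x (bar x) u = u
  have L1 : ∀ x u : G, f x (bar x) u = u := by
    intro x u
    have h := a1 x x (bar x) u x
    rw [hbar] at h
    exact (soly x x (f x u x)).unique h.symm rfl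
  -- L2 : f (bar x) x u = u
  have L2 : ∀ x u : G, f (bar x) x u = u := by
    intro x u
    have h := a1 x (bar x) x u x
    rw [L1] at h
    exact (soly x x (f x u x)).unique h.symm rfl
  -- L3 : f u x (bar x) = u
  have L3 : ∀ x u : G, f u x (bar x) = u := by
    intro x u
    have h := a1 u x (bar x) x x
    rw [L1] at h
    exact (solx x x (f u x x)).unique h rfl
  -- L4 : f u (bar x) x = u
  have L4 : ∀ x u : G, f u (bar x) x = u := by
    intro x u
    have h := a1 u (bar x) x x x
    rw [L2] at h
    exact (solx x x (f u x x)).unique h rfl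
  refine ⟨?_, ?_, ?_, ?_, ?_, ?_⟩
  · intro x y z
    rw [a1, a2]
  · intro x
    exact ⟨L2 a x, L3 a x⟩
  · intro x
    constructor
    · rw [← a2 x a (bar a) (bar x) (bar a), L1, L1]
    · rw [a1, L4 a (bar x), L4 x (bar a)]
  · constructor
    · intro x y h
      exact (soly (bar a) a (f (bar a) y a)).unique h rfl
    · intro c
      obtain ⟨y, hy, _⟩ := soly (bar a) a c
      exact ⟨y, hy⟩
  · intro x y
    rw [a2 (bar a) x a y a, a1 (bar a) x a a (f (bar a) y a),
      a2 (bar a) x a a (f (bar a) y a), ← a2 a a (bar a) y a, L1 a y]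
  · intro x y z
    have s1 : f x a (f (bar a) y a) = f x y a := by
      rw [← a2 x a (bar a) y a, L1 a y]
    have s2 : f (bar a) (f (bar a) z a) a = f (f (bar a) (bar a) z) a a :=
      (a1 (bar a) (bar a) z a a).symm
    rw [s1, s2]
    rw [a1 (f x y a) a (f (f (bar a) (bar a) z) a a) a (f (bar a) (bar a) (bar a)),
      a2 (f x y a) a (f (f (bar a) (bar a) z) a a) a (f (bar a) (bar a) (bar a))]
    have s3 : f (f (f (bar a) (bar a) z) a a) a (f (bar a) (bar a) (bar a))
        = f (bar a) (bar a) z := by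
      rw [← a2 (f (f (bar a) (bar a) z) a a) a (bar a) (bar a) (bar a), L1 a (bar a)]
      rw [a1 (f (bar a) (bar a) z) a a (bar a) (bar a), hbar a]
      rw [a1 (bar a) (bar a) z a (bar a), a2 (bar a) (bar a) z a (bar a), L3 a z]
    rw [s3]
    rw [← a2 (f x y a) a (bar a) (bar a) z, L1 a (bar a)]
    rw [a1 x y a (bar a) z, L3 a y]
end

section
/- In a ternary group, the binary retract group (G, ∗) with x∗y = [xay] is unique up to isomorphism: for any a, b ∈ G, the retracts ret_a(G,[ ]) and ret_b(G,[ ]) are isomorphic binary groups. -/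
/-- All retracts of a ternary group are isomorphic: for any a, b the binary
groups (G, x∗y = [xay]) and (G, x∗y = [xby]) are isomorphic. -/
theorem stmt13 {G : Type*} (f : G → G → G → G)
    (assoc : ∀ x y z u v : G, f (f x y z) u v = f x (f y z u) v ∧
      f x (f y z u) v = f x y (f z u v))
    (solx : ∀ a b c : G, ∃! x, f x a b = c)
    (soly : ∀ a b c : G, ∃! y, f a y b = c)
    (solz : ∀ a b c : G, ∃! z, f a b z = c)
    (a b : G) :
    ∃ θ : G → G, Function.Bijective θ ∧
      ∀ x y : G, θ (f x a y) = f (θ x) b (θ y) := by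
  obtain ⟨t, ht, -⟩ := soly a b a
  refine ⟨fun x => f x a t, ⟨?_, ?_⟩, ?_⟩
  · intro x y h
    obtain ⟨z, hz, huniq⟩ := solx a t (f y a t)
    exact (huniq x h).trans (huniq y rfl).symm
  · intro c
    obtain ⟨x, hx, -⟩ := solx a t c
    exact ⟨x, hx⟩
  · intro x y
    simp only
    calc f (f x a y) a t = f x (f a y a) t := (assoc x a y a t).1
      _ = f x a (f y a t) := (assoc x a y a t).2
      _ = f x (f a t b) (f y a t) := by rw [ht]
      _ = f (f x a t) b (f y a t) := ((assoc x a t b (f y a t)).1).symm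
end

section
/- In a medial ternary group, the skew element of a product satisfies [xyz]‾ = [x̄ȳz̄] for all x,y,z, and consequently every medial ternary group is semicommutative ([xyz] = [zyx]). -/
/-- In a medial ternary group, [xyz]‾ = [x̄ȳz̄], and consequently the group
is semicommutative. -/
theorem stmt14 {G : Type*} (f : G → G → G → G)
    (assoc : ∀ x y z u v : G, f (f x y z) u v = f x (f y z u) v ∧
      f x (f y z u) v = f x y (f z u v))
    (solx : ∀ a b c : G, ∃! x, f x a b = c)
    (soly : ∀ a b c : G, ∃! y, f a y b = c)
    (solz : ∀ a b c : G, ∃! z, f a b z = c)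
    (bar : G → G) (hbar : ∀ x : G, f x x (bar x) = x)
    (medial : ∀ x11 x12 x13 x21 x22 x23 x31 x32 x33 : G,
      f (f x11 x12 x13) (f x21 x22 x23) (f x31 x32 x33) =
      f (f x11 x21 x31) (f x12 x22 x32) (f x13 x23 x33)) :
    (∀ x y z : G, bar (f x y z) = f (bar x) (bar y) (bar z)) ∧
    (∀ x y z : G, f x y z = f z y x) := by
  have cancL : ∀ a b c c' : G, f c a b = f c' a b → c = c' := by
    intro a b c c' h
    exact (solx a b (f c' a b)).unique h rfl
  have cancR : ∀ a b c c' : G, f a b c = f a b c' → c = c' := by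
    intro a b c c' h
    exact (solz a b (f a b c')).unique h rfl
  have lem1 : ∀ x y : G, f (bar x) x y = y := by
    intro x y
    have h := assoc x x (bar x) x y
    have h2 : f x x y = f x x (f (bar x) x y) := by
      rw [← h.1.trans h.2, hbar]
    exact (cancR _ _ _ _ h2).symm
  have lem3 : ∀ x : G, f x (bar x) x = x := by
    intro x
    have h := assoc x (bar x) x x x
    have h2 : f (f x (bar x) x) x x = f x x x := by
      rw [h.1, lem1]
    exact cancL _ _ _ _ h2
  have lem2 : ∀ x y : G, f y x (bar x) = y := by
    intro x y
    have h := assoc y x (bar x) x x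
    have h2 : f (f y x (bar x)) x x = f y x x := by
      rw [h.1, lem3]
    exact cancL _ _ _ _ h2
  have lem4 : ∀ x y : G, f x (bar x) y = y := by
    intro x y
    obtain ⟨b, hb, -⟩ := solz x x y
    have h := assoc x (bar x) x x b
    calc f x (bar x) y = f x (bar x) (f x x b) := by rw [hb]
      _ = f (f x (bar x) x) x b := (h.1.trans h.2).symm
      _ = f x x b := by rw [lem3]
      _ = y := hb
  have barbar : ∀ x : G, bar (bar x) = x := by
    intro x
    have key : f (bar x) (bar x) x = bar x := by
      apply cancR x x
      have h := assoc x x (bar x) (bar x) x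
      rw [← h.1.trans h.2, hbar x, lem3]
    exact ((solz (bar x) (bar x) (bar x)).unique (hbar (bar x)) key)
  have part1 : ∀ x y z : G, bar (f x y z) = f (bar x) (bar y) (bar z) := by
    intro x y z
    have key : f (f x y z) (f x y z) (f (bar x) (bar y) (bar z)) = f x y z := by
      rw [medial x y z x y z (bar x) (bar y) (bar z), hbar, hbar, hbar]
    exact (solz _ _ _).unique (hbar _) key
  have anti : ∀ x y z : G, bar (f x y z) = f (bar z) (bar y) (bar x) := by
    intro x y z
    have key : f (f x y z) (f x y z) (f (bar z) (bar y) (bar x)) = f x y z := by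
      have h1 := assoc x y z (f x y z) (f (bar z) (bar y) (bar x))
      rw [h1.1.trans h1.2]
      have h2 := assoc z x y z (f (bar z) (bar y) (bar x))
      rw [h2.2]
      have h3 := assoc y z (bar z) (bar y) (bar x)
      rw [← h3.1.trans h3.2, lem2, lem4, lem2]
    exact (solz _ _ _).unique (hbar _) key
  refine ⟨part1, fun x y z => ?_⟩
  have e1 : bar (f (bar x) (bar y) (bar z)) = f x y z := by
    rw [part1, barbar, barbar, barbar]
  have e2 : bar (f (bar x) (bar y) (bar z)) = f z y x := by
    rw [anti, barbar, barbar, barbar]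
  exact e1.symm.trans e2
end

section
/- A ternary group is medial if and only if it is semicommutative. -/
/-- A ternary group is medial iff it is semicommutative. -/
theorem stmt15 {G : Type*} (f : G → G → G → G)
    (assoc : ∀ x y z u v : G, f (f x y z) u v = f x (f y z u) v ∧
      f x (f y z u) v = f x y (f z u v))
    (solx : ∀ a b c : G, ∃! x, f x a b = c)
    (soly : ∀ a b c : G, ∃! y, f a y b = c)
    (solz : ∀ a b c : G, ∃! z, f a b z = c) :
    (∀ x11 x12 x13 x21 x22 x23 x31 x32 x33 : G,
      f (f x11 x12 x13) (f x21 x22 x23) (f x31 x32 x33) =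
      f (f x11 x21 x31) (f x12 x22 x32) (f x13 x23 x33)) ↔
    (∀ x y z : G, f x y z = f z y x) := by
  have A1 : ∀ x y z u v : G, f (f x y z) u v = f x (f y z u) v :=
    fun x y z u v => (assoc x y z u v).1
  have A2 : ∀ x y z u v : G, f x (f y z u) v = f x y (f z u v) :=
    fun x y z u v => (assoc x y z u v).2
  constructor
  · -- medial → semicommutative
    intro med x y z
    obtain ⟨t, ht, -⟩ := soly x x x
    have h1 : ∀ w, f x t w = w := by
      intro w
      obtain ⟨u, hu, -⟩ := solz x x w
      calc f x t w = f x t (f x x u) := by rw [hu]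
        _ = f (f x t x) x u := ((A1 x t x x u).trans (A2 x t x x u)).symm
        _ = f x x u := by rw [ht]
        _ = w := hu
    have h2 : ∀ w, f w t x = w := by
      intro w
      obtain ⟨u, hu, -⟩ := solx x x w
      calc f w t x = f (f u x x) t x := by rw [hu]
        _ = f u x (f x t x) := (A1 u x x t x).trans (A2 u x x t x)
        _ = f u x x := by rw [ht]
        _ = w := hu
    obtain ⟨s, hs, -⟩ := soly t t t
    have hs2 : ∀ w, f w s t = w := by
      intro w
      obtain ⟨u, hu, -⟩ := solx t t w
      calc f w s t = f (f u t t) s t := by rw [hu]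
        _ = f u t (f t s t) := (A1 u t t s t).trans (A2 u t t s t)
        _ = f u t t := by rw [hs]
        _ = w := hu
    have comm : ∀ u v, f u t v = f v t u := by
      intro u v
      calc f u t v = f (f x t u) (f t s t) (f v t x) := by rw [h1 u, hs, h2 v]
        _ = f (f x t v) (f t s t) (f u t x) := med x t u t s t v t x
        _ = f v t u := by rw [h1 v, hs, h2 u]
    calc f x y z = f (f x t x) (f y s t) (f x t z) := by rw [ht, hs2 y, h1 z]
      _ = f (f x y x) (f t s t) (f x t z) := med x t x y s t x t z
      _ = f (f x y x) (f t s t) (f z t x) := by rw [comm x z]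
      _ = f (f x t z) (f y s t) (f x t x) := (med x t z y s t x t x).symm
      _ = f z y x := by rw [h1 z, hs2 y, ht]
  · -- semicommutative → medial
    intro comm a b c d e g h i j
    -- swap positions 2 and 4 in a product of nine
    have sw24 : ∀ p q r u v w X : G,
        f (f p q r) (f u v w) X = f (f p u r) (f q v w) X := by
      intro p q r u v w X
      calc f (f p q r) (f u v w) X = f (f (f p q r) u v) w X := (A1 (f p q r) u v w X).symm
        _ = f (f p (f q r u) v) w X := by rw [A1 p q r u v]
        _ = f (f p (f u r q) v) w X := by rw [comm q r u]
        _ = f (f (f p u r) q v) w X := by rw [A1 p u r q v]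
        _ = f (f p u r) (f q v w) X := A1 (f p u r) q v w X
    have sw68 : ∀ X u v w p q r : G,
        f X (f u v w) (f p q r) = f X (f u v q) (f p w r) := by
      intro X u v w p q r
      calc f X (f u v w) (f p q r) = f X u (f v w (f p q r)) := A2 X u v w (f p q r)
        _ = f X u (f v (f w p q) r) := by rw [A2 v w p q r]
        _ = f X u (f v (f q p w) r) := by rw [comm w p q]
        _ = f X u (f v q (f p w r)) := by rw [A2 v q p w r]
        _ = f X (f u v q) (f p w r) := (A2 X u v q (f p w r)).symm
    have sw35 : ∀ p q r u v w X : G,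
        f (f p q r) (f u v w) X = f (f p q v) (f u r w) X := by
      intro p q r u v w X
      calc f (f p q r) (f u v w) X = f (f (f p q r) u v) w X := (A1 (f p q r) u v w X).symm
        _ = f (f p q (f r u v)) w X := by rw [A1 p q r u v, A2 p q r u v]
        _ = f (f p q (f v u r)) w X := by rw [comm r u v]
        _ = f (f (f p q v) u r) w X := by rw [A1 p q v u r, A2 p q v u r]
        _ = f (f p q v) (f u r w) X := A1 (f p q v) u r w X
    have sw57 : ∀ X u v w p q r : G,
        f X (f u v w) (f p q r) = f X (f u p w) (f v q r) := by
      intro X u v w p q r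
      calc f X (f u v w) (f p q r) = f X u (f v w (f p q r)) := A2 X u v w (f p q r)
        _ = f X u (f (f v w p) q r) := by rw [A1 v w p q r, A2 v w p q r]
        _ = f X u (f (f p w v) q r) := by rw [comm v w p]
        _ = f X u (f p w (f v q r)) := by rw [A1 p w v q r, A2 p w v q r]
        _ = f X (f u p w) (f v q r) := (A2 X u p w (f v q r)).symm
    calc f (f a b c) (f d e g) (f h i j)
        = f (f a d c) (f b e g) (f h i j) := sw24 a b c d e g (f h i j)
      _ = f (f a d c) (f b e i) (f h g j) := sw68 (f a d c) b e g h i j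
      _ = f (f a d e) (f b c i) (f h g j) := sw35 a d c b e i (f h g j)
      _ = f (f a d e) (f b h i) (f c g j) := sw57 (f a d e) b c i h g j
      _ = f (f a d h) (f b e i) (f c g j) := sw35 a d e b h i (f c g j)
end

section
/- A ternary group is semicommutative if and only if there exists a fixed element a ∈ G such that [xay] = [yax] for all x,y ∈ G. -/
/-- A ternary group is semicommutative iff there exists a fixed a with
[xay] = [yax] for all x,y. -/
theorem stmt16 {G : Type*} [Nonempty G] (f : G → G → G → G)
    (assoc : ∀ x y z u v : G, f (f x y z) u v = f x (f y z u) v ∧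
      f x (f y z u) v = f x y (f z u v))
    (solx : ∀ a b c : G, ∃! x, f x a b = c)
    (soly : ∀ a b c : G, ∃! y, f a y b = c)
    (solz : ∀ a b c : G, ∃! z, f a b z = c) :
    (∀ x y z : G, f x y z = f z y x) ↔ (∃ a : G, ∀ x y : G, f x a y = f y a x) := by
  constructor
  · intro h
    obtain ⟨a⟩ := ‹Nonempty G›
    exact ⟨a, fun x y => h x a y⟩
  · rintro ⟨a, comm⟩ x y z
    obtain ⟨u, hu, -⟩ := soly a a y
    calc f x y z = f x (f a u a) z := by rw [hu]
      _ = f (f x a u) a z := ((assoc x a u a z).1).symm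
      _ = f z a (f x a u) := comm _ _
      _ = f z (f a x a) u := ((assoc z a x a u).2).symm
      _ = f (f z a x) a u := ((assoc z a x a u).1).symm
      _ = f u a (f z a x) := comm _ _
      _ = f u (f a z a) x := ((assoc u a z a x).2).symm
      _ = f (f u a z) a x := ((assoc u a z a x).1).symm
      _ = f (f z a u) a x := by rw [comm u z]
      _ = f z (f a u a) x := (assoc z a u a x).1
      _ = f z y x := by rw [hu]
end

section
/- (Post theorem for ternary groups) For any ternary group (G,[ ]) and fixed c ∈ G, the set G* = G × Z₂ with the binary operation defined by (x,0)∗(y,0) = ([xyc̄],1), (x,0)∗(y,1) = ([xyc],0), (x,1)∗(y,0) = ([xcy],0), (x,1)∗(y,1) = ([xcy],1), is a group with identity (c̄,1) in which H = {(x,1) : x ∈ G} is a normal subgroup of index 2, and ((x,0)∗(y,0))∗(z,0) = ([xyz],0) for all x,y,z ∈ G. -/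
/-- Post theorem: For a ternary group (G,[ ]) and fixed c, the operation on
G × Z₂ given by (x,0)∗(y,0) = ([xyc̄],1), (x,0)∗(y,1) = ([xyc],0), (x,1)∗(y,0) = ([xcy],0),
(x,1)∗(y,1) = ([xcy],1) is a group with identity (c̄,1), the explicit inverses are
(x,0)⁻¹ = (x̄,0) and (x,1)⁻¹ = ([c̄ x̄ c̄],1), the set H = {(x,1)} is the kernel of the
surjective parity homomorphism onto Z₂ (hence a normal subgroup of index 2), and
((x,0)∗(y,0))∗(z,0) = ([xyz],0).  (Bool encodes Z₂ with false = 0, true = 1.) -/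
theorem stmt17 {G : Type*} (f : G → G → G → G)
    (assoc : ∀ x y z u v : G, f (f x y z) u v = f x (f y z u) v ∧
      f x (f y z u) v = f x y (f z u v))
    (solx : ∀ a b c : G, ∃! x, f x a b = c)
    (soly : ∀ a b c : G, ∃! y, f a y b = c)
    (solz : ∀ a b c : G, ∃! z, f a b z = c)
    (bar : G → G) (hbar : ∀ x : G, f x x (bar x) = x)
    (c : G)
    (op : G × Bool → G × Bool → G × Bool)
    (hop : ∀ x y : G,
      op (x, false) (y, false) = (f x y (bar c), true) ∧
      op (x, false) (y, true) = (f x y c, false) ∧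
      op (x, true) (y, false) = (f x c y, false) ∧
      op (x, true) (y, true) = (f x c y, true)) :
    (∀ p q r : G × Bool, op (op p q) r = op p (op q r)) ∧
    (∀ p : G × Bool, op (bar c, true) p = p ∧ op p (bar c, true) = p) ∧
    (∀ x : G, op (x, false) (bar x, false) = (bar c, true) ∧
      op (bar x, false) (x, false) = (bar c, true) ∧
      op (x, true) (f (bar c) (bar x) (bar c), true) = (bar c, true) ∧
      op (f (bar c) (bar x) (bar c), true) (x, true) = (bar c, true)) ∧
    (∀ p q : G × Bool, (op p q).2 = (p.2 == q.2)) ∧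
    (∀ x y z : G, op (op (x, false) (y, false)) (z, false) = (f x y z, false)) := by
  have a1 : ∀ x y z u v : G, f (f x y z) u v = f x (f y z u) v :=
    fun x y z u v => (assoc x y z u v).1
  have a2 : ∀ x y z u v : G, f x (f y z u) v = f x y (f z u v) :=
    fun x y z u v => (assoc x y z u v).2
  have a13 : ∀ x y z u v : G, f (f x y z) u v = f x y (f z u v) :=
    fun x y z u v => (a1 x y z u v).trans (a2 x y z u v)
  have injz : ∀ a b z1 z2 : G, f a b z1 = f a b z2 → z1 = z2 := by
    intro a b z1 z2 h
    exact (solz a b (f a b z2)).unique h rfl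
  have injx : ∀ a b x1 x2 : G, f x1 a b = f x2 a b → x1 = x2 := by
    intro a b x1 x2 h
    exact (solx a b (f x2 a b)).unique h rfl
  have l1 : ∀ x : G, f (bar x) x (bar x) = bar x := by
    intro x
    apply injz x x
    calc f x x (f (bar x) x (bar x)) = f (f x x (bar x)) x (bar x) := (a13 ..).symm
      _ = f x x (bar x) := congrArg (fun t => f t x (bar x)) (hbar x)
  have l2 : ∀ x y : G, f (bar x) x y = y := by
    intro x y
    apply injz (bar x) x
    show f (bar x) x (f (bar x) x y) = f (bar x) x y
    rw [← a13, l1]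
  have l3 : ∀ x y : G, f y x (bar x) = y := by
    intro x y
    apply injx x (bar x)
    show f (f y x (bar x)) x (bar x) = f y x (bar x)
    rw [a13, l1]
  have l4 : ∀ x y : G, f x (bar x) y = y := by
    intro x y
    have h : f x (bar x) y = f (f (bar x) x x) (bar x) y := by rw [l2]
    rw [h, a1, hbar, l2]
  have l5 : ∀ x y : G, f y (bar x) x = y := by
    intro x y
    have h : f y (bar x) x = f y (bar x) (f x x (bar x)) := by rw [hbar]
    rw [h, ← a2, l2, l3]
  have h00 : ∀ x y : G, op (x, false) (y, false) = (f x y (bar c), true) :=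
    fun x y => (hop x y).1
  have h01 : ∀ x y : G, op (x, false) (y, true) = (f x y c, false) :=
    fun x y => (hop x y).2.1
  have h10 : ∀ x y : G, op (x, true) (y, false) = (f x c y, false) :=
    fun x y => (hop x y).2.2.1
  have h11 : ∀ x y : G, op (x, true) (y, true) = (f x c y, true) :=
    fun x y => (hop x y).2.2.2
  refine ⟨?_, ?_, ?_, ?_, ?_⟩
  · rintro ⟨x, bx⟩ ⟨y, byy⟩ ⟨z, bz⟩
    cases bx <;> cases byy <;> cases bz
    · rw [h00, h10, h00, h01, a13, l2, a2, l5]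
    · rw [h00, h11, h01, h00, a13, l2, a2, l3]
    · rw [h01, h00, h10, h00, a1]
    · rw [h01, h01, h11, h01, a1]
    · rw [h10, h00, h00, h11, a13]
    · rw [h10, h01, h01, h10, a13]
    · rw [h11, h10, h10, h10, a13]
    · rw [h11, h11, h11, h11, a13]
  · rintro ⟨x, b⟩
    cases b
    · exact ⟨by rw [h10, l2], by rw [h01, l5]⟩
    · exact ⟨by rw [h11, l2], by rw [h11, l3]⟩
  · intro x
    refine ⟨?_, ?_, ?_, ?_⟩
    · rw [h00, l4]
    · rw [h00, l2]
    · rw [h11, ← a13, l3, l4]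
    · rw [h11, a13, l2, l5]
  · rintro ⟨x, bx⟩ ⟨y, byy⟩
    cases bx <;> cases byy
    · rw [h00]; rfl
    · rw [h01]; rfl
    · rw [h10]; rfl
    · rw [h11]; rfl
  · intro x y z
    rw [h00, h10, a13, l2]
end
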